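/- Let A be a Banach algebra and B a Banach A-bimodule. If the canonical image of A in A** satisfies â·a″ ∈ Â for every a ∈ A and a″ ∈ A** (products being the first Arens product; this is the paper's hypothesis that A is an ideal in A**), then b′a ∈ wap_ℓ(B) for every b′ ∈ B* and a ∈ A, where (b′a)(b) := b′(π_ℓ(a, b)). -/

import Mathlib

/- Common setup: Arens extensions of bounded bilinear maps between Banach spaces,
weak*–weak* continuity, and related notions. -/

open NormedSpace ContinuousLinearMap Filter Topology

set_option maxSynthPendingDepth 2

section ArensDefs

variable (𝕜 : Type*) [RCLike 𝕜]
variable {X Y Z : Type*}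
  [NormedAddCommGroup X] [NormedSpace 𝕜 X]
  [NormedAddCommGroup Y] [NormedSpace 𝕜 Y]
  [NormedAddCommGroup Z] [NormedSpace 𝕜 Z]

/-- The first adjoint `m*` of a bounded bilinear map `m : X × Y → Z`, characterized by
`⟨m*(z′,x), y⟩ = ⟨z′, m(x,y)⟩`. -/
noncomputable def arensS (m : X →L[𝕜] Y →L[𝕜] Z) :
    StrongDual 𝕜 Z →L[𝕜] X →L[𝕜] StrongDual 𝕜 Y :=
  ((compL 𝕜 X (Y →L[𝕜] Z) (StrongDual 𝕜 Y)).flip m).comp (compL 𝕜 Y Z 𝕜)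

/-- The second adjoint `m**`, characterized by `⟨m**(y″,z′), x⟩ = ⟨y″, m*(z′,x)⟩`. -/
noncomputable def arensSS (m : X →L[𝕜] Y →L[𝕜] Z) :
    StrongDual 𝕜 (StrongDual 𝕜 Y) →L[𝕜] StrongDual 𝕜 Z →L[𝕜] StrongDual 𝕜 X :=
  ((compL 𝕜 (StrongDual 𝕜 Z) (X →L[𝕜] StrongDual 𝕜 Y) (StrongDual 𝕜 X)).flip (arensS 𝕜 m)).comp
    (compL 𝕜 X (StrongDual 𝕜 Y) 𝕜)

/-- The Arens (triple adjoint) extension `m***` of a bounded bilinear map, characterized by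
`⟨m***(x″,y″), z′⟩ = ⟨x″, m**(y″,z′)⟩`. -/
noncomputable def arensExt (m : X →L[𝕜] Y →L[𝕜] Z) :
    StrongDual 𝕜 (StrongDual 𝕜 X) →L[𝕜] StrongDual 𝕜 (StrongDual 𝕜 Y) →L[𝕜] StrongDual 𝕜 (StrongDual 𝕜 Z) :=
  ((compL 𝕜 (StrongDual 𝕜 (StrongDual 𝕜 Y)) (StrongDual 𝕜 Z →L[𝕜] StrongDual 𝕜 X) (StrongDual 𝕜 (StrongDual 𝕜 Z))).flip
      (arensSS 𝕜 m)).comp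
    (compL 𝕜 (StrongDual 𝕜 Z) (StrongDual 𝕜 X) 𝕜)

end ArensDefs

/-- A map between dual spaces is weak*–weak* continuous if it is continuous with respect to
the weak* topologies on both sides. -/
def IsWeakStarWeakStarContinuous (𝕜 : Type*) [RCLike 𝕜] {E F : Type*}
    [NormedAddCommGroup E] [NormedSpace 𝕜 E]
    [NormedAddCommGroup F] [NormedSpace 𝕜 F]
    (T : StrongDual 𝕜 E → StrongDual 𝕜 F) : Prop :=
  Continuous fun x : WeakDual 𝕜 E =>
    (StrongDual.toWeakDual (T (WeakDual.toStrongDual x)) : WeakDual 𝕜 F)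

/-- `b′ ∈ wap_ℓ(B)`: for every `a″ ∈ A**` the functional `b″ ↦ ⟨π_ℓ***(a″, b″), b′⟩` is
weak*-continuous on `B**`. -/
def MemWapLeft (𝕜 : Type*) [RCLike 𝕜] {A B : Type*}
    [NormedAddCommGroup A] [NormedSpace 𝕜 A]
    [NormedAddCommGroup B] [NormedSpace 𝕜 B]
    (πℓ : A →L[𝕜] B →L[𝕜] B) (b' : StrongDual 𝕜 B) : Prop :=
  ∀ a'' : StrongDual 𝕜 (StrongDual 𝕜 A),
    Continuous fun b'' : WeakDual 𝕜 (StrongDual 𝕜 B) =>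
      arensExt 𝕜 πℓ a'' (WeakDual.toStrongDual b'') b'

/-! For `b′ ∈ B*` and `a ∈ A`, associativity of the left action gives
`⟨π_ℓ***(a″, b″), b′a⟩ = ⟨â·a″, π_ℓ**(b″, b′)⟩`. Since `A` is an ideal in `A**`, `â·a″ = x̂` for
some `x ∈ A`, so this equals `⟨b″, b′x⟩`: as a function of `b″` it is evaluation at a fixed
element of `B*`, hence weak*-continuous. -/

section ArensModule

variable {𝕜 : Type*} [RCLike 𝕜]
  {A : Type*} [NonUnitalNormedRing A] [NormedSpace 𝕜 A] [IsScalarTower 𝕜 A A] [SMulCommClass 𝕜 A A]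
  {B : Type*} [NormedAddCommGroup B] [NormedSpace 𝕜 B]

theorem arensSS_arensS_eq_arensS_mul (πℓ : A →L[𝕜] B →L[𝕜] B)
    (hℓ : ∀ (a₁ a₂ : A) (b : B), πℓ (a₁ * a₂) b = πℓ a₁ (πℓ a₂ b))
    (b'' : StrongDual 𝕜 (StrongDual 𝕜 B)) (b' : StrongDual 𝕜 B) (a : A) :
    arensSS 𝕜 πℓ b'' (arensS 𝕜 πℓ b' a) =
      arensS 𝕜 (ContinuousLinearMap.mul 𝕜 A) (arensSS 𝕜 πℓ b'' b') a := by
  ext y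
  change b'' _ = b'' _
  congr 1
  ext z
  change b' (πℓ a (πℓ y z)) = b' (πℓ (a * y) z)
  rw [hℓ]

theorem arensExt_arensS_eq_arensExt_mul (πℓ : A →L[𝕜] B →L[𝕜] B)
    (hℓ : ∀ (a₁ a₂ : A) (b : B), πℓ (a₁ * a₂) b = πℓ a₁ (πℓ a₂ b))
    (a'' : StrongDual 𝕜 (StrongDual 𝕜 A)) (b'' : StrongDual 𝕜 (StrongDual 𝕜 B))
    (b' : StrongDual 𝕜 B) (a : A) :
    arensExt 𝕜 πℓ a'' b'' (arensS 𝕜 πℓ b' a) =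
      arensExt 𝕜 (ContinuousLinearMap.mul 𝕜 A) (inclusionInDoubleDual 𝕜 A a) a''
        (arensSS 𝕜 πℓ b'' b') :=
  congrArg a'' (arensSS_arensS_eq_arensS_mul πℓ hℓ b'' b' a)

end ArensModule

theorem wapLeft_smul_of_ideal_in_doubleDual_general
    {𝕜 : Type*} [RCLike 𝕜]
    {A : Type*} [NonUnitalNormedRing A] [NormedSpace 𝕜 A]
    [IsScalarTower 𝕜 A A] [SMulCommClass 𝕜 A A]
    {B : Type*} [NormedAddCommGroup B] [NormedSpace 𝕜 B]
    (πℓ : A →L[𝕜] B →L[𝕜] B)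
    (hℓ : ∀ (a₁ a₂ : A) (b : B), πℓ (a₁ * a₂) b = πℓ a₁ (πℓ a₂ b))
    (hideal : ∀ (a : A) (a'' : StrongDual 𝕜 (StrongDual 𝕜 A)), ∃ x : A,
      arensExt 𝕜 (ContinuousLinearMap.mul 𝕜 A) (inclusionInDoubleDual 𝕜 A a) a'' =
        inclusionInDoubleDual 𝕜 A x) :
    ∀ (b' : StrongDual 𝕜 B) (a : A), MemWapLeft 𝕜 πℓ (b'.comp (πℓ a)) := by
  intro b' a a''
  obtain ⟨x, hx⟩ := hideal a a''
  have h_eval : ∀ b'' : StrongDual 𝕜 (StrongDual 𝕜 B),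
      arensExt 𝕜 πℓ a'' b'' (b'.comp (πℓ a)) = b'' (arensS 𝕜 πℓ b' x) := fun b'' => by
    rw [show b'.comp (πℓ a) = arensS 𝕜 πℓ b' a from rfl,
      arensExt_arensS_eq_arensExt_mul πℓ hℓ, hx]
    rfl
  exact (WeakDual.eval_continuous (arensS 𝕜 πℓ b' x)).congr fun b'' => (h_eval _).symm

/-- If `A` is a (left) ideal in `A**` — i.e. `â·a″ ∈ Â` for all `a ∈ A`,
`a″ ∈ A**`, products being the first Arens product — then `b′a ∈ wap_ℓ(B)` for every
`b′ ∈ B*` and `a ∈ A`. -/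
theorem wapLeft_smul_of_ideal_in_doubleDual
    {𝕜 : Type*} [RCLike 𝕜]
    {A : Type*} [NonUnitalNormedRing A] [NormedSpace 𝕜 A]
    [IsScalarTower 𝕜 A A] [SMulCommClass 𝕜 A A] [CompleteSpace A]
    {B : Type*} [NormedAddCommGroup B] [NormedSpace 𝕜 B] [CompleteSpace B]
    (πℓ : A →L[𝕜] B →L[𝕜] B) (πr : B →L[𝕜] A →L[𝕜] B)
    (hℓ : ∀ (a₁ a₂ : A) (b : B), πℓ (a₁ * a₂) b = πℓ a₁ (πℓ a₂ b))
    (hr : ∀ (b : B) (a₁ a₂ : A), πr b (a₁ * a₂) = πr (πr b a₁) a₂)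
    (hℓr : ∀ (a₁ : A) (b : B) (a₂ : A), πr (πℓ a₁ b) a₂ = πℓ a₁ (πr b a₂))
    (hideal : ∀ (a : A) (a'' : StrongDual 𝕜 (StrongDual 𝕜 A)), ∃ x : A,
      arensExt 𝕜 (ContinuousLinearMap.mul 𝕜 A) (inclusionInDoubleDual 𝕜 A a) a'' =
        inclusionInDoubleDual 𝕜 A x) :
    ∀ (b' : StrongDual 𝕜 B) (a : A), MemWapLeft 𝕜 πℓ (b'.comp (πℓ a)) :=
  wapLeft_smul_of_ideal_in_doubleDual_general πℓ hℓ hideal
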